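/- (Jensen's theorem for quaternions) Let g ∈ ℝ[X] with deg g ≥ 1 and let f = g.map φ ∈ ℍ[X], where φ : ℝ → ℍ is the canonical algebra map. If λ ∈ ℍ \ ℝ satisfies f′(λ) = 0, then there exists z ∈ ℍ with f(z) = 0 and im z ≠ 0 such that ‖λ − φ(re z)‖ ≤ ‖im z‖; i.e., λ lies on or within the Jensen sphere of the non-real root z, the sphere in ℍ with center re(z) and radius ‖im z‖. -/

import Mathlib

open Polynomial ComplexConjugate

/-! A non-real critical point `λ` of `f` lies in the slice `ℝ + ℝu`, `u = im λ / ‖im λ‖`, an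
isometric copy of `ℂ` in `ℍ` that contains the (real) coefficients of `f`, so the theorem reduces to
Jensen's theorem over `ℂ`. There, if `w` with `Im w > 0` lay outside the Jensen disk of every
root `r`, then `Im (w - r)⁻¹ + Im (w - r̄)⁻¹ < 0` for each root; as the roots of a real
polynomial are closed under conjugation, summing over them contradicts
`∑ᵣ (w - r)⁻¹ = f'(w) / f(w) = 0`. -/

namespace Complex

theorem norm_sub_re_self (w : ℂ) : ‖w - w.re‖ = |w.im| := by
  rw [show w - w.re = w.im * I by apply Complex.ext <;> simp]
  simp

theorem im_inv_sub_add_im_inv_sub_conj_neg {w r : ℂ} (hw : 0 < w.im)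
    (hr : |r.im| < ‖w - r.re‖) : (w - r)⁻¹.im + (w - conj r)⁻¹.im < 0 := by
  have hr2 : r.im ^ 2 < (w.re - r.re) ^ 2 + w.im ^ 2 := by
    have h := pow_lt_pow_left₀ hr (abs_nonneg _) two_ne_zero
    rw [sq_abs, Complex.sq_norm, normSq_apply] at h
    simpa [sq] using h
  have hN₁ : 0 < (w.re - r.re) ^ 2 + (w.im - r.im) ^ 2 := by nlinarith
  have hN₂ : 0 < (w.re - r.re) ^ 2 + (w.im + r.im) ^ 2 := by nlinarith
  simp only [inv_im, normSq_apply, sub_re, sub_im, conj_re, conj_im, ← sq, sub_neg_eq_add]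
  rw [div_add_div _ _ hN₁.ne' hN₂.ne']
  -- the numerator is `-2 Im w ((Re w - Re r)² + (Im w)² - (Im r)²)`
  exact div_neg_of_neg_of_pos (by nlinarith) (by positivity)

end Complex

namespace Polynomial

theorem aroots_map_conj (g : ℝ[X]) : (g.aroots ℂ).map conj = g.aroots ℂ := by
  rw [aroots_def, ← (IsAlgClosed.splits _).roots_map, map_map]
  congr 2
  ext x
  simp

theorem sum_inv_sub_aroots_eq_zero {g : ℝ[X]} {w : ℂ} (hw : aeval w g ≠ 0)
    (hcrit : aeval w (derivative g) = 0) : ((g.aroots ℂ).map fun r => (w - r)⁻¹).sum = 0 := by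
  have h := (IsAlgClosed.splits (g.map (algebraMap ℝ ℂ))).eval_derivative_div_eval_of_ne_zero
    (x := w) (by rwa [eval_map_algebraMap])
  rw [derivative_map, eval_map_algebraMap, hcrit, zero_div] at h
  simpa [one_div, aroots_def] using h.symm

theorem exists_aeval_eq_zero_norm_sub_re_le_abs_im {g : ℝ[X]} (hg : 0 < g.natDegree)
    {w : ℂ} (hw : 0 < w.im) (hcrit : aeval w (derivative g) = 0) :
    ∃ r : ℂ, aeval r g = 0 ∧ r.im ≠ 0 ∧ ‖w - r.re‖ ≤ |r.im| := by
  by_contra! hfar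
  have hroots : ∀ r ∈ g.aroots ℂ, |r.im| < ‖w - r.re‖ := by
    intro r hr
    by_cases him : r.im = 0
    · rw [him, abs_zero, norm_pos_iff, sub_ne_zero]
      rintro rfl
      simp at hw
    · exact hfar r (mem_aroots.1 hr).2 him
  have hw0 : aeval w g ≠ 0 := fun h =>
    (hroots w (mem_aroots.2 ⟨ne_zero_of_natDegree_gt hg, h⟩)).ne (Complex.norm_sub_re_self w).symm
  have hne : g.aroots ℂ ≠ 0 := by
    apply (IsAlgClosed.splits _).roots_ne_zero
    rw [natDegree_map]
    exact hg.ne'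
  have hsum : ((g.aroots ℂ).map fun r => (w - r)⁻¹.im).sum = 0 := by
    simpa [map_multiset_sum, Multiset.map_map] using
      congrArg Complex.imAddGroupHom (sum_inv_sub_aroots_eq_zero hw0 hcrit)
  have hsum_conj : ((g.aroots ℂ).map fun r => (w - conj r)⁻¹.im).sum = 0 := by
    rwa [← aroots_map_conj g, Multiset.map_map] at hsum
  have hneg := Multiset.sum_lt_sum_of_nonempty hne
    fun r hr => Complex.im_inv_sub_add_im_inv_sub_conj_neg hw (hroots r hr)
  rw [Multiset.sum_map_add, hsum, hsum_conj] at hneg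
  simp at hneg

end Polynomial

namespace Quaternion

theorem sq_norm_eq_sq_re_add_sq_norm_im (q : ℍ[ℝ]) : ‖q‖ ^ 2 = q.re ^ 2 + ‖q.im‖ ^ 2 := by
  simp only [sq, ← normSq_eq_norm_mul_self, normSq_def', re_im, imI_im, imJ_im, imK_im]
  ring

variable {u : ℍ[ℝ]}

theorem mul_self_eq_neg_one_of_re_eq_zero (hu₀ : u.re = 0) (hu₁ : ‖u‖ = 1) : u * u = -1 := by
  have h := self_mul_star u
  rw [star_eq_neg.2 hu₀, normSq_eq_norm_mul_self, hu₁, mul_neg, mul_one, coe_one] at h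
  exact neg_eq_iff_eq_neg.1 h

noncomputable def complexSlice (hu₀ : u.re = 0) (hu₁ : ‖u‖ = 1) : ℂ →ₐ[ℝ] ℍ[ℝ] :=
  Complex.liftAux u (mul_self_eq_neg_one_of_re_eq_zero hu₀ hu₁)

variable (hu₀ : u.re = 0) (hu₁ : ‖u‖ = 1)

theorem complexSlice_apply (c : ℂ) : complexSlice hu₀ hu₁ c = c.re + c.im • u := by
  simp [complexSlice, Complex.liftAux_apply, algebraMap_def]

theorem complexSlice_ofReal (x : ℝ) : complexSlice hu₀ hu₁ x = x := by
  rw [AlgHom.map_coe_real_complex, Quaternion.algebraMap_def]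

theorem re_complexSlice (c : ℂ) : (complexSlice hu₀ hu₁ c).re = c.re := by
  simp [complexSlice_apply, hu₀]

theorem norm_im_complexSlice (c : ℂ) : ‖(complexSlice hu₀ hu₁ c).im‖ = |c.im| := by
  have hu : u.im = u := by rw [← sub_re_self, hu₀, coe_zero, sub_zero]
  simp [complexSlice_apply, hu, norm_smul, hu₁]

theorem norm_complexSlice (c : ℂ) : ‖complexSlice hu₀ hu₁ c‖ = ‖c‖ := by
  refine (pow_left_inj₀ (norm_nonneg _) (norm_nonneg _) two_ne_zero).1 ?_
  rw [sq_norm_eq_sq_re_add_sq_norm_im, re_complexSlice, norm_im_complexSlice, sq_abs,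
    Complex.sq_norm, Complex.normSq_apply, sq, sq]

theorem exists_complexSlice_apply_eq (q : ℍ[ℝ]) (hq : q.im ≠ 0) :
    ∃ (u : ℍ[ℝ]) (hu₀ : u.re = 0) (hu₁ : ‖u‖ = 1) (w : ℂ),
      0 < w.im ∧ complexSlice hu₀ hu₁ w = q := by
  have hpos : 0 < ‖q.im‖ := norm_pos_iff.2 hq
  refine ⟨‖q.im‖⁻¹ • q.im, by simp, ?_, ⟨q.re, ‖q.im‖⟩, hpos, ?_⟩
  · rw [norm_smul, norm_inv, norm_norm, inv_mul_cancel₀ hpos.ne']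
  · rw [complexSlice_apply, smul_smul, mul_inv_cancel₀ hpos.ne', one_smul, re_add_im]

end Quaternion

open Quaternion in
theorem jensen_theorem_quaternions
    (g : Polynomial ℝ) (hg : 1 ≤ g.natDegree)
    (f : Polynomial (Quaternion ℝ))
    (hf : f = g.map (algebraMap ℝ (Quaternion ℝ)))
    (lam : Quaternion ℝ)
    (hlam : lam ∉ Set.range (algebraMap ℝ (Quaternion ℝ)))
    (hcrit : Polynomial.eval lam (derivative f) = 0) :
    ∃ z : Quaternion ℝ, Polynomial.eval z f = 0 ∧ z.im ≠ 0 ∧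
      ‖lam - ((z.re : ℝ) : Quaternion ℝ)‖ ≤ ‖z.im‖ := by
  have him : lam.im ≠ 0 := fun h => hlam <| by
    rw [Quaternion.algebraMap_def, ← eq_re_iff_mem_range_coe, ← sub_eq_zero, sub_re_self, h]
  obtain ⟨u, hu₀, hu₁, w, hw, rfl⟩ := exists_complexSlice_apply_eq lam him
  set ψ := complexSlice hu₀ hu₁
  have hcritℂ : aeval w (derivative g) = 0 := by
    rw [hf, derivative_map, eval_map_algebraMap, aeval_algHom_apply] at hcrit
    exact (map_eq_zero_iff ψ ψ.toRingHom.injective).1 hcrit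
  obtain ⟨r, hr, hrim, hle⟩ := exists_aeval_eq_zero_norm_sub_re_le_abs_im hg hw hcritℂ
  refine ⟨ψ r, ?_, ?_, ?_⟩
  · rw [hf, eval_map_algebraMap, aeval_algHom_apply, hr, map_zero]
  · rw [← norm_ne_zero_iff, norm_im_complexSlice]
    exact abs_ne_zero.2 hrim
  · rwa [re_complexSlice, ← complexSlice_ofReal hu₀ hu₁, ← map_sub, norm_complexSlice,
      norm_im_complexSlice]
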